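/- Let an observational semantics over types S, R, A with transition relation Tr, local extraction function E_l, local reconstruction function I_l, and initial states S₀ satisfy the local faithfulness condition: for all r, s, s' with Tr(r, s, s') and every actual trace T^w obtained by extraction along a generated virtual trace from an initial state ending in s, setting a = E_l(s, r, s', T^w), one has I_l(s, T^w ++ [a]) = (r, s'). Then E restricted to the set 𝒯^v of finite generated virtual traces is a bijection onto its image 𝒯^w = E(𝒯^v), and I restricted to 𝒯^w is its two-sided inverse: I(E(T^v)) = T^v for all T^v ∈ 𝒯^v and E(I(T^w)) = T^w for all T^w ∈ 𝒯^w (i.e., E = I⁻¹ and I = E⁻¹ on these sets). -/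

import Mathlib

variable {S R A : Type*}

/-- A generated virtual trace from a state: each event `(rᵢ, sᵢ)` is a transition
from the previous state. -/
def IsGenTrace (Tr : R → S → S → Prop) : S → List (R × S) → Prop
  | _, [] => True
  | s, (r, s') :: evs => Tr r s s' ∧ IsGenTrace Tr s' evs

/-- The final state reached by a virtual trace. -/
def finalState : S → List (R × S) → S
  | s, [] => s
  | _, (_, s') :: evs => finalState s' evs

/-- Auxiliary extraction with an accumulator holding the already generated actual trace. -/
def extractAux (El : S → R → S → List A → A) : S → List A → List (R × S) → List A
  | _, _, [] => []
  | s, acc, (r, s') :: evs =>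
      El s r s' acc :: extractAux El s' (acc ++ [El s r s' acc]) evs

/-- The extended extraction function `E`: `aᵢ = E_l(s_{i-1}, rᵢ, sᵢ, [a₁,…,a_{i-1}])`. -/
def extract (El : S → R → S → List A → A) (s₀ : S) (evs : List (R × S)) : List A :=
  extractAux El s₀ [] evs

/-- Auxiliary reconstruction with an accumulator holding the already read actual trace. -/
def reconAux (Il : S → List A → R × S) : S → List A → List A → List (R × S)
  | _, _, [] => []
  | s, acc, a :: as =>
      Il s (acc ++ [a]) :: reconAux Il (Il s (acc ++ [a])).2 (acc ++ [a]) as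

/-- The extended reconstruction function `I`: `(rᵢ, sᵢ) = I_l(s_{i-1}, [a₁,…,aᵢ])`. -/
def recon (Il : S → List A → R × S) (s₀ : S) (as : List A) : List (R × S) :=
  reconAux Il s₀ [] as

/-- The local faithfulness condition. -/
def LocalFaithful (Tr : R → S → S → Prop) (El : S → R → S → List A → A)
    (Il : S → List A → R × S) (S₀ : Set S) : Prop :=
  ∀ r s s', Tr r s s' →
    ∀ s₀ ∈ S₀, ∀ evs : List (R × S), IsGenTrace Tr s₀ evs → finalState s₀ evs = s →
      Il s (extract El s₀ evs ++ [El s r s' (extract El s₀ evs)]) = (r, s')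

/-! Local faithfulness is exactly the induction step showing that `I` undoes `E` on generated
traces. A map with a left inverse on a set is injective there, hence a bijection onto its image,
and the left inverse is then a right inverse on that image. -/

lemma finalState_append (s : S) (xs ys : List (R × S)) :
    finalState s (xs ++ ys) = finalState (finalState s xs) ys := by
  induction xs generalizing s with
  | nil => rfl
  | cons x xs ih => exact ih x.2

lemma isGenTrace_append (Tr : R → S → S → Prop) (s : S) (xs ys : List (R × S)) :
    IsGenTrace Tr s (xs ++ ys) ↔
      IsGenTrace Tr s xs ∧ IsGenTrace Tr (finalState s xs) ys := by
  induction xs generalizing s with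
  | nil => simp [IsGenTrace, finalState]
  | cons x xs ih => simp [IsGenTrace, finalState, ih, and_assoc]

lemma extractAux_append (El : S → R → S → List A → A) (s : S) (acc : List A)
    (xs ys : List (R × S)) :
    extractAux El s acc (xs ++ ys) =
      extractAux El s acc xs ++
        extractAux El (finalState s xs) (acc ++ extractAux El s acc xs) ys := by
  induction xs generalizing s acc with
  | nil => simp [extractAux, finalState]
  | cons x xs ih => simp [extractAux, finalState, ih]

lemma extract_append_singleton (El : S → R → S → List A → A) (s₀ : S) (evs : List (R × S))
    (r : R) (s' : S) :
    extract El s₀ (evs ++ [(r, s')]) =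
      extract El s₀ evs ++ [El (finalState s₀ evs) r s' (extract El s₀ evs)] :=
  extractAux_append El s₀ [] evs [(r, s')]

-- The prefix `evs₀` plays the role of `T^w` in `LocalFaithful`, which is applied once per event.
lemma reconAux_extractAux_of_isGenTrace_append (Tr : R → S → S → Prop)
    (El : S → R → S → List A → A) (Il : S → List A → R × S) (S₀ : Set S)
    (hLF : LocalFaithful Tr El Il S₀) {s₀ : S} (hs₀ : s₀ ∈ S₀) (evs₀ evs : List (R × S))
    (hgen : IsGenTrace Tr s₀ (evs₀ ++ evs)) :
    reconAux Il (finalState s₀ evs₀) (extract El s₀ evs₀)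
      (extractAux El (finalState s₀ evs₀) (extract El s₀ evs₀) evs) = evs := by
  induction evs generalizing evs₀ with
  | nil => rfl
  | cons ev evs ih =>
    obtain ⟨r, s'⟩ := ev
    have hgen' : IsGenTrace Tr s₀ ((evs₀ ++ [(r, s')]) ++ evs) := by simpa using hgen
    obtain ⟨hprefix, htr, -⟩ := (isGenTrace_append Tr s₀ evs₀ _).1 hgen
    have hstep := hLF r _ s' htr s₀ hs₀ evs₀ hprefix rfl
    have hrest := ih (evs₀ ++ [(r, s')]) hgen'
    rw [finalState_append, extract_append_singleton] at hrest
    simp only [extractAux, reconAux, hstep]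
    exact congrArg _ hrest

lemma recon_extract (Tr : R → S → S → Prop) (El : S → R → S → List A → A)
    (Il : S → List A → R × S) (S₀ : Set S) (hLF : LocalFaithful Tr El Il S₀)
    {s₀ : S} (hs₀ : s₀ ∈ S₀) {evs : List (R × S)} (hgen : IsGenTrace Tr s₀ evs) :
    recon Il s₀ (extract El s₀ evs) = evs :=
  reconAux_extractAux_of_isGenTrace_append Tr El Il S₀ hLF hs₀ [] evs hgen

theorem extract_bijOn_and_recon_inverse_general
    (Tr : R → S → S → Prop)
    (El : S → R → S → List A → A) (Il : S → List A → R × S) (S₀ : Set S)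
    (hLF : LocalFaithful Tr El Il S₀) :
    Set.BijOn (fun T : S × List (R × S) => (T.1, extract El T.1 T.2))
        {T : S × List (R × S) | T.1 ∈ S₀ ∧ IsGenTrace Tr T.1 T.2}
        ((fun T : S × List (R × S) => (T.1, extract El T.1 T.2)) ''
          {T : S × List (R × S) | T.1 ∈ S₀ ∧ IsGenTrace Tr T.1 T.2}) ∧
      (∀ T ∈ {T : S × List (R × S) | T.1 ∈ S₀ ∧ IsGenTrace Tr T.1 T.2},
        (fun W : S × List A => (W.1, recon Il W.1 W.2))
          ((fun T : S × List (R × S) => (T.1, extract El T.1 T.2)) T) = T) ∧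
      (∀ W ∈ (fun T : S × List (R × S) => (T.1, extract El T.1 T.2)) ''
          {T : S × List (R × S) | T.1 ∈ S₀ ∧ IsGenTrace Tr T.1 T.2},
        (fun T : S × List (R × S) => (T.1, extract El T.1 T.2))
          ((fun W : S × List A => (W.1, recon Il W.1 W.2)) W) = W) := by
  have hinv : Set.LeftInvOn (fun W : S × List A => (W.1, recon Il W.1 W.2))
      (fun T : S × List (R × S) => (T.1, extract El T.1 T.2))
      {T : S × List (R × S) | T.1 ∈ S₀ ∧ IsGenTrace Tr T.1 T.2} := by
    rintro ⟨s₀, evs⟩ ⟨hs₀, hgen⟩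
    simp only [recon_extract Tr El Il S₀ hLF hs₀ hgen]
  exact ⟨hinv.injOn.bijOn_image, hinv, hinv.rightInvOn_image⟩

/-- Under the local faithfulness condition, `E` restricted to the set
`𝒯^v` of finite generated virtual traces is a bijection onto its image
`𝒯^w = E(𝒯^v)`, and `I` restricted to `𝒯^w` is its two-sided inverse. -/
theorem extract_bijOn_and_recon_inverse
    (Tr : R → S → S → Prop)
    (hFun : ∀ r s s' s'', Tr r s s' → Tr r s s'' → s' = s'')
    (El : S → R → S → List A → A) (Il : S → List A → R × S) (S₀ : Set S)
    (hLF : LocalFaithful Tr El Il S₀) :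
    Set.BijOn (fun T : S × List (R × S) => (T.1, extract El T.1 T.2))
        {T : S × List (R × S) | T.1 ∈ S₀ ∧ IsGenTrace Tr T.1 T.2}
        ((fun T : S × List (R × S) => (T.1, extract El T.1 T.2)) ''
          {T : S × List (R × S) | T.1 ∈ S₀ ∧ IsGenTrace Tr T.1 T.2}) ∧
      (∀ T ∈ {T : S × List (R × S) | T.1 ∈ S₀ ∧ IsGenTrace Tr T.1 T.2},
        (fun W : S × List A => (W.1, recon Il W.1 W.2))
          ((fun T : S × List (R × S) => (T.1, extract El T.1 T.2)) T) = T) ∧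
      (∀ W ∈ (fun T : S × List (R × S) => (T.1, extract El T.1 T.2)) ''
          {T : S × List (R × S) | T.1 ∈ S₀ ∧ IsGenTrace Tr T.1 T.2},
        (fun T : S × List (R × S) => (T.1, extract El T.1 T.2))
          ((fun W : S × List A => (W.1, recon Il W.1 W.2)) W) = W) :=
  extract_bijOn_and_recon_inverse_general Tr El Il S₀ hLF
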